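/- arXiv:1212.5960 — 2 statements merged into one kernel-verified Lean document; each statement's English description precedes it below -/
import Mathlib

section
/- Let G be a factorizable graph, M a perfect matching of G, and H a factor-component of G. A set S ⊆ V(H) is a member of P_G(H) if and only if S is a maximal subset of V(H) with the property that there is no M-saturated path between any two vertices of S. -/
open SimpleGraph

section Defs

variable {V : Type*} {W : Type*}

/-- A graph is factorizable if it has a perfect matching. -/
def Factorizable (G : SimpleGraph V) : Prop :=
  ∃ M : SimpleGraph.Subgraph G, M.IsPerfectMatching

/-- An edge is allowed if some perfect matching contains it. -/
def Allowed (G : SimpleGraph V) (e : Sym2 V) : Prop :=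
  ∃ M : SimpleGraph.Subgraph G, M.IsPerfectMatching ∧ e ∈ M.edgeSet

/-- The spanning subgraph formed by the allowed edges. -/
def allowedSubgraph (G : SimpleGraph V) : SimpleGraph V :=
  SimpleGraph.fromEdgeSet {e | e ∈ G.edgeSet ∧ Allowed G e}

/-- `u` and `v` lie in the same factor-component of `G`. -/
def SameFC (G : SimpleGraph V) (u v : V) : Prop :=
  (allowedSubgraph G).Reachable u v

/-- `C` is the vertex set of a factor-component of `G`. -/
def IsFactorComponent (G : SimpleGraph V) (C : Set V) : Prop :=
  ∃ v : V, C = {w | SameFC G v w}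

/-- Edges alternate along a list: the `i`-th edge lies in `F` iff `i` is even. -/
def IsAltList (F : Set (Sym2 V)) (l : List (Sym2 V)) : Prop :=
  ∀ (i : ℕ) (h : i < l.length), (l.get ⟨i, h⟩ ∈ F ↔ Even i)

/-- An `M`-saturated path: odd length, `M ∩ E(P)` a perfect matching of `P`. -/
def IsSaturatedPath {G : SimpleGraph V} (F : Set (Sym2 V)) {u v : V}
    (p : G.Walk u v) : Prop :=
  p.IsPath ∧ Odd p.length ∧ IsAltList F p.edges

/-- An `M`-balanced path from `u` to `v`: even length, `M ∩ E(P)` a near-perfect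
matching of `P` exposing only `v`. -/
def IsBalancedPath {G : SimpleGraph V} (F : Set (Sym2 V)) {u v : V}
    (p : G.Walk u v) : Prop :=
  p.IsPath ∧ Even p.length ∧ IsAltList F p.edges

/-- The number of odd components of `G - X`. -/
noncomputable def qG (G : SimpleGraph V) (X : Set V) : ℕ :=
  {c : (G.induce Xᶜ).ConnectedComponent | Odd c.supp.ncard}.ncard

/-- The set of vertices contained in odd components of `G - X`. -/
def DX (G : SimpleGraph V) (X : Set V) : Set V :=
  {v | ∃ h : v ∈ Xᶜ, Odd ((G.induce Xᶜ).connectedComponentMk ⟨v, h⟩).supp.ncard}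

/-- The set of vertices contained in even components of `G - X`. -/
def CX (G : SimpleGraph V) (X : Set V) : Set V := (X ∪ DX G X)ᶜ

/-- A barrier of a factorizable graph: `q_G(X) = |X|`. -/
def IsBarrier (G : SimpleGraph V) (X : Set V) : Prop := qG G X = X.ncard

/-- An odd-maximal barrier: no nonempty `Y ⊆ D_X` with `X ∪ Y` a barrier. -/
def IsOddMaximalBarrier (G : SimpleGraph V) (X : Set V) : Prop :=
  IsBarrier G X ∧ ∀ Y ⊆ DX G X, Y.Nonempty → ¬ IsBarrier G (X ∪ Y)

/-- Kita's equivalence relation `u ∼_G v`. -/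
def simG (G : SimpleGraph V) (u v : V) : Prop :=
  SameFC G u v ∧ (u = v ∨ ¬ Factorizable (G.induce {w : V | w ≠ u ∧ w ≠ v}))

/-- `S` is a class of the generalized canonical partition `P(G)`. -/
def IsCanonicalClass (G : SimpleGraph V) (S : Set V) : Prop :=
  ∃ v : V, S = {u | simG G u v}

/-- `S` is a member of `P_G(H)` where `C = V(H)`. -/
def IsClassOf (G : SimpleGraph V) (C S : Set V) : Prop :=
  IsCanonicalClass G S ∧ S ⊆ C

/-- A separating set meets each factor-component fully or not at all. -/
def IsSeparating (G : SimpleGraph V) (X : Set V) : Prop :=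
  ∀ C : Set V, IsFactorComponent G C → C ⊆ X ∨ Disjoint C X

/-- Factor-critical: deleting any vertex leaves a factorizable (or empty) graph. -/
def FactorCritical (H : SimpleGraph W) : Prop :=
  ∀ v : W, Factorizable (H.induce {w : W | w ≠ v})

/-- The graph `G[X]/C`: induced on `X`, with `C` contracted to a single
vertex (`none`). -/
def contractSet (G : SimpleGraph V) (X C : Set V) :
    SimpleGraph (Option {x : V // x ∈ X \ C}) :=
  SimpleGraph.fromRel (fun a b =>
    match a, b with
    | some x, some y => G.Adj x.1 y.1
    | some x, none => ∃ c ∈ C ∩ X, G.Adj x.1 c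
    | none, _ => False)

/-- `X` is a critical-inducing set for the factor-component `C1` to `C2`. -/
def CriticalInducing (G : SimpleGraph V) (C1 C2 X : Set V) : Prop :=
  IsSeparating G X ∧ C1 ∪ C2 ⊆ X ∧ FactorCritical (contractSet G X C1)

/-- Kita's partial order `C1 ◁ C2` on factor-components. -/
def compOrder (G : SimpleGraph V) (C1 C2 : Set V) : Prop :=
  ∃ X : Set V, CriticalInducing G C1 C2 X

/-- `V↑*(H)`: union of the vertex sets of all factor-components above `C`. -/
def upStar (G : SimpleGraph V) (C : Set V) : Set V :=
  {v | ∃ C' : Set V, IsFactorComponent G C' ∧ compOrder G C C' ∧ v ∈ C'}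

/-- `K` is (the vertex set of) a connected component of `G[U]`. -/
def IsComponentOf (G : SimpleGraph V) (U K : Set V) : Prop :=
  ∃ (v : V) (hv : v ∈ U),
    K = {w | ∃ hw : w ∈ U, (G.induce U).Reachable ⟨v, hv⟩ ⟨w, hw⟩}

/-- `V↑(S)` for a class `S ∈ P_G(H)` where `C = V(H)`. -/
def upOfClass (G : SimpleGraph V) (C S : Set V) : Set V :=
  {v | ∃ C' : Set V, IsFactorComponent G C' ∧ C' ≠ C ∧ compOrder G C C' ∧ v ∈ C' ∧
    ∃ K : Set V, IsComponentOf G (upStar G C \ C) K ∧ C' ⊆ K ∧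
      ∀ w ∈ C, (∃ k ∈ K, G.Adj k w) → w ∈ S}

/-- `V↑*(S) = V↑(S) ∪ S`. -/
def upStarOfClass (G : SimpleGraph V) (C S : Set V) : Set V := upOfClass G C S ∪ S

/-- The odd components of `G - X`, as a type. -/
abbrev OddCompT (G : SimpleGraph V) (X : Set V) :=
  {c : (G.induce Xᶜ).ConnectedComponent // Odd c.supp.ncard}

/-- Vertices of `H_X(G)`: vertices of `X` together with contracted odd components. -/
abbrev HVert (G : SimpleGraph V) (X : Set V) := {x : V // x ∈ X} ⊕ OddCompT G X

/-- The bipartite graph `H_X(G)`. -/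
def HGraph (G : SimpleGraph V) (X : Set V) : SimpleGraph (HVert G X) :=
  SimpleGraph.fromRel (fun a b =>
    ∃ (x : {x : V // x ∈ X}) (c : OddCompT G X) (y : (Xᶜ : Set V)),
      a = Sum.inl x ∧ b = Sum.inr c ∧
      (G.induce Xᶜ).connectedComponentMk y = c.1 ∧ G.Adj x.1 y.1)

/-- The edge set of `H_X(G)` corresponding to `M ∩ δ(X)`. -/
def projEdges (G : SimpleGraph V) (X : Set V) (M : SimpleGraph.Subgraph G) :
    Set (Sym2 (HVert G X)) :=
  {e | ∃ (x : {x : V // x ∈ X}) (c : OddCompT G X) (y : (Xᶜ : Set V)),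
    (G.induce Xᶜ).connectedComponentMk y = c.1 ∧ s(x.1, y.1) ∈ M.edgeSet ∧
    e = s(Sum.inl x, Sum.inr c)}

/-- The projection of a vertex of `G` to `H_X(G)` (`none` on `C_X`). -/
noncomputable def projV (G : SimpleGraph V) (X : Set V) (v : V) :
    Option (HVert G X) := by
  classical
  exact if h : v ∈ X then some (Sum.inl ⟨v, h⟩)
  else if ho : Odd ((G.induce Xᶜ).connectedComponentMk ⟨v, h⟩).supp.ncard then
    some (Sum.inr ⟨(G.induce Xᶜ).connectedComponentMk ⟨v, h⟩, ho⟩)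
  else none

/-- The support of the contraction `P/K_1/⋯/K_l` of a path of `G` to `H_X(G)`. -/
noncomputable def contractSupport (G : SimpleGraph V) (X : Set V) (l : List V) :
    List (HVert G X) := by
  classical
  exact List.destutter (· ≠ ·) ((l.map (projV G X)).reduceOption)

/-- One step of the Dulmage–Mendelsohn relation with respect to the color class
`A`: some edge joins `B ∩ V(c)` to `A ∩ V(d)`. -/
def dmStep (H : SimpleGraph W) (A : Set W)
    (c d : (allowedSubgraph H).ConnectedComponent) : Prop :=
  ∃ b a : W, b ∉ A ∧ a ∈ A ∧ b ∈ c.supp ∧ a ∈ d.supp ∧ H.Adj b a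

/-- The Dulmage–Mendelsohn order `⪯` with respect to `A`. -/
def dmLE (H : SimpleGraph W) (A : Set W) :
    (allowedSubgraph H).ConnectedComponent →
      (allowedSubgraph H).ConnectedComponent → Prop :=
  Relation.ReflTransGen (dmStep H A)

/-- The vertex set of the expansion of a DM-component `c` of `H_X(G)`. -/
def expansionVerts (G : SimpleGraph V) (X : Set V)
    (c : (allowedSubgraph (HGraph G X)).ConnectedComponent) : Set V :=
  {v | (∃ h : v ∈ X, Sum.inl ⟨v, h⟩ ∈ c.supp) ∨
       (∃ (h : v ∈ Xᶜ) (ho : Odd ((G.induce Xᶜ).connectedComponentMk ⟨v, h⟩).supp.ncard),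
         Sum.inr ⟨(G.induce Xᶜ).connectedComponentMk ⟨v, h⟩, ho⟩ ∈ c.supp)}

/-- A set of edges forms a perfect matching of `H`. -/
def IsPerfectMatchingSet (H : SimpleGraph W) (F : Set (Sym2 W)) : Prop :=
  F ⊆ H.edgeSet ∧ ∀ w : W, ∃! e : Sym2 W, e ∈ F ∧ w ∈ e

/-- The graph `P − E(H)`: the edges of the path `p` that are not edges of the
induced subgraph `G[C]`. -/
def earGraph (G : SimpleGraph V) (C : Set V) {u v : V} (p : G.Walk u v) :
    SimpleGraph V :=
  SimpleGraph.fromEdgeSet {e | e ∈ p.edges ∧ ¬ ∀ z ∈ e, z ∈ C}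

/-- `K` is a connected component of `Q` containing at least one edge. -/
def IsEdgeComponentOf (Q : SimpleGraph V) (K : Set V) : Prop :=
  ∃ a b : V, Q.Adj a b ∧ K = {w | Q.Reachable a w}

/-- The end vertices of a path-component `K` of `Q` (vertices of degree `≤ 1`). -/
def pathEnds (Q : SimpleGraph V) (K : Set V) : Set V :=
  {z ∈ K | ¬ ∃ w₁ w₂ : V, w₁ ≠ w₂ ∧ Q.Adj z w₁ ∧ Q.Adj z w₂}

/-- The maximum size of a matching of `G`. -/
noncomputable def matchNum (G : SimpleGraph V) : ℕ :=
  sSup {n : ℕ | ∃ M : SimpleGraph.Subgraph G, M.IsMatching ∧ M.edgeSet.ncard = n}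

/-- A barrier of a general graph, via the Berge formula. -/
def IsBarrierGen [Fintype V] (G : SimpleGraph V) (X : Set V) : Prop :=
  qG G X = (Fintype.card V - 2 * matchNum G) + X.ncard

/-- An odd-maximal barrier of a general graph. -/
def IsOddMaximalBarrierGen [Fintype V] (G : SimpleGraph V) (X : Set V) : Prop :=
  IsBarrierGen G X ∧ ∀ Y ⊆ DX G X, Y.Nonempty → ¬ IsBarrierGen G (X ∪ Y)

end Defs

/-!
For `u ≠ v`, the graph `G - u - v` is factorizable iff there is an `M`-saturated `u`–`v` path:
switching `M` along such a path exposes exactly `u` and `v`, and conversely the symmetric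
difference of `M` with a perfect matching of `G - u - v` plus the pair `uv` is a union of
alternating cycles, one of which passes through `uv`. So `∼_G` on a factor-component `H` is
"equal or joined by no saturated path", and the members of `P_G(H)` are the maximal cliques of
this equivalence relation once it is known to be transitive.

Transitivity: the vertices reached from `v` by an alternating path starting with an edge of `M`
form a set closed under allowed edges (an allowed edge `xy` closes a saturated `x`–`y` path into an
alternating cycle), so they contain the factor-component of `v`. Splicing such a path from `v` to
`u` into a saturated `u`–`w` path at its first vertex on it gives a saturated path from `v` to `u`
or to `w`.
-/

namespace SimpleGraph.Subgraph.IsPerfectMatching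

variable {V : Type*} {G : SimpleGraph V} {M : Subgraph G} (hM : M.IsPerfectMatching)

noncomputable def partner (v : V) : V := (hM.1 (hM.2 v)).choose

lemma adj_partner (v : V) : M.Adj v (hM.partner v) := (hM.1 (hM.2 v)).choose_spec.1

lemma eq_partner_of_adj {v w : V} (h : M.Adj v w) : w = hM.partner v :=
  (hM.1 (hM.2 v)).choose_spec.2 w h

lemma partner_involutive : Function.Involutive hM.partner := fun v =>
  (hM.eq_partner_of_adj (hM.adj_partner v).symm).symm

lemma partner_ne (v : V) : hM.partner v ≠ v := (hM.adj_partner v).ne.symm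

end SimpleGraph.Subgraph.IsPerfectMatching

section AltList

variable {V : Type*} {F : Set (Sym2 V)} {e : Sym2 V} {l l₁ l₂ : List (Sym2 V)}

lemma isAltList_iff_getElem :
    IsAltList F l ↔ ∀ (i : ℕ) (h : i < l.length), (l[i] ∈ F ↔ Even i) := Iff.rfl

lemma isAltList_cons_iff : IsAltList F (e :: l) ↔ e ∈ F ∧ IsAltList Fᶜ l := by
  simp only [isAltList_iff_getElem, List.length_cons, Set.mem_compl_iff]
  refine ⟨fun h => ⟨by simpa using h 0 (by omega), fun i hi => ?_⟩, fun ⟨he, h⟩ i hi => ?_⟩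
  · have := h (i + 1) (by omega)
    simp only [List.getElem_cons_succ, Nat.even_add_one] at this
    tauto
  · rcases i with _ | i
    · simpa using he
    · have := h i (by omega)
      simp only [List.getElem_cons_succ, Nat.even_add_one]
      tauto

lemma isAltList_singleton_iff : IsAltList F [e] ↔ e ∈ F := by
  simp [isAltList_iff_getElem]

namespace IsAltList

lemma append (h₁ : IsAltList F l₁) (h₂ : IsAltList F l₂) (he : Even l₁.length) :
    IsAltList F (l₁ ++ l₂) := by
  rw [isAltList_iff_getElem] at *
  intro i hi
  rw [List.getElem_append]
  split_ifs with h
  · exact h₁ i h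
  · obtain ⟨j, rfl⟩ : ∃ j, i = l₁.length + j := ⟨i - l₁.length, by omega⟩
    rw [List.length_append] at hi
    simpa [Nat.even_add, he] using h₂ j (by omega)

lemma of_append_left (h : IsAltList F (l₁ ++ l₂)) : IsAltList F l₁ := by
  rw [isAltList_iff_getElem] at *
  intro i hi
  have := h i (by simp; omega)
  rwa [List.getElem_append_left hi] at this

lemma of_append_right (h : IsAltList F (l₁ ++ l₂)) (he : Even l₁.length) : IsAltList F l₂ := by
  rw [isAltList_iff_getElem] at *
  intro i hi
  have := h (l₁.length + i) (by simp; omega)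
  rw [List.getElem_append_right (by omega), Nat.even_add] at this
  simpa [he] using this

lemma concat (h : IsAltList F l) (he : e ∈ F ↔ Even l.length) : IsAltList F (l ++ [e]) := by
  rw [isAltList_iff_getElem] at *
  intro i hi
  simp only [List.length_append, List.length_singleton] at hi
  rw [List.getElem_append]
  split_ifs with h'
  · exact h i h'
  · simpa [show i = l.length by omega] using he

lemma reverse (h : IsAltList F l) (ho : Odd l.length) : IsAltList F l.reverse := by
  rw [isAltList_iff_getElem] at *
  intro i hi
  rw [List.length_reverse] at hi
  rw [List.getElem_reverse, h _ (by omega)]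
  obtain ⟨k, hk⟩ := ho
  rw [show l.length - 1 - i = 2 * k - i by omega]
  constructor <;> rintro ⟨m, hm⟩ <;> exact ⟨k - m, by omega⟩

lemma odd_length_of_reverse (h : IsAltList F l) (h' : IsAltList F l.reverse) (hl : l ≠ []) :
    Odd l.length := by
  rw [isAltList_iff_getElem] at *
  have hpos := List.length_pos_iff.mpr hl
  have := h' 0 (by simpa using hpos)
  simp only [List.getElem_reverse, Nat.sub_zero, Even.zero, iff_true] at this
  rw [h _ (by omega)] at this
  obtain ⟨k, hk⟩ := this
  exact ⟨k, by omega⟩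

end IsAltList

end AltList

namespace SimpleGraph.Walk

variable {V : Type*} {G : SimpleGraph V}

lemma IsPath.append_of_forall_mem {u v w : V} {p : G.Walk u v} {q : G.Walk v w}
    (hp : p.IsPath) (hq : q.IsPath) (hpq : ∀ x ∈ p.support, x ∈ q.support → x = v) :
    (p.append q).IsPath := by
  rw [isPath_def, support_append]
  have hq' := (isPath_def q).mp hq
  rw [← cons_tail_support q, List.nodup_cons] at hq'
  refine List.Nodup.append ((isPath_def p).mp hp) hq'.2 fun x hxp hxq => ?_
  obtain rfl := hpq x hxp (List.mem_of_mem_tail hxq)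
  exact hq'.1 hxq

lemma exists_append_forall_mem_eq {S : Set V} :
    ∀ {v x : V} (q : G.Walk v x), x ∈ S → ∃ z ∈ S, ∃ (q₁ : G.Walk v z) (q₂ : G.Walk z x),
      q = q₁.append q₂ ∧ ∀ a ∈ q₁.support, a ∈ S → a = z
  | _, _, .nil, hx => ⟨_, hx, nil, nil, rfl, by simp⟩
  | v, _, .cons h q, hx => by
    by_cases hv : v ∈ S
    · exact ⟨v, hv, nil, cons h q, rfl, by simp⟩
    obtain ⟨z, hz, q₁, q₂, rfl, hq₁⟩ := exists_append_forall_mem_eq q hx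
    refine ⟨z, hz, cons h q₁, q₂, rfl, ?_⟩
    simp only [support_cons, List.mem_cons, forall_eq_or_imp]
    exact ⟨fun hv' => absurd hv' hv, hq₁⟩

end SimpleGraph.Walk

section SaturatedPath

open SimpleGraph.Walk

variable {V : Type*} {G : SimpleGraph V} {F : Set (Sym2 V)}

lemma IsSaturatedPath.ne {u v : V} {p : G.Walk u v} (hp : IsSaturatedPath F p) : u ≠ v := by
  rintro rfl
  simpa [length_eq_zero_iff.mpr (isPath_iff_nil.mp hp.1)] using hp.2.1

lemma IsSaturatedPath.reverse {u v : V} {p : G.Walk u v} (hp : IsSaturatedPath F p) :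
    IsSaturatedPath F p.reverse :=
  ⟨hp.1.reverse, by simpa using hp.2.1,
    by simpa using hp.2.2.reverse (by simpa using hp.2.1)⟩

lemma isSaturatedPath_cons_nil {u v : V} (h : G.Adj u v) (he : s(u, v) ∈ F) :
    IsSaturatedPath F (cons h nil) :=
  ⟨by simp [h.ne], by simp, by simpa [isAltList_singleton_iff] using he⟩

lemma isSaturatedPath_append {a z b : V} {q : G.Walk a z} {r : G.Walk z b} (hq : q.IsPath)
    (hqF : IsAltList F q.edges) (hqe : Even q.length) (hr : IsSaturatedPath F r)
    (hqr : ∀ x ∈ q.support, x ∈ r.support → x = z) : IsSaturatedPath F (q.append r) :=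
  ⟨hq.append_of_forall_mem hr.1 hqr, by simpa using hqe.add_odd hr.2.1,
    by simpa using hqF.append hr.2.2 (by simpa using hqe)⟩

lemma IsSaturatedPath.of_append_right {a z b : V} {l₁ : G.Walk a z} {l₂ : G.Walk z b}
    (hl : IsSaturatedPath F (l₁.append l₂)) (he : Even l₁.length) : IsSaturatedPath F l₂ := by
  obtain ⟨hp, ho, halt⟩ := hl
  rw [length_append] at ho
  rw [edges_append] at halt
  exact ⟨hp.of_append_right, (Nat.odd_add'.mp ho).mpr he,
    halt.of_append_right (by simpa using he)⟩

lemma IsSaturatedPath.reverse_of_append_left {a z b : V} {l₁ : G.Walk a z} {l₂ : G.Walk z b}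
    (hl : IsSaturatedPath F (l₁.append l₂)) (ho : Odd l₁.length) :
    IsSaturatedPath F l₁.reverse := by
  obtain ⟨hp, -, halt⟩ := hl
  rw [edges_append] at halt
  exact IsSaturatedPath.reverse ⟨hp.of_append_left, ho, halt.of_append_left⟩

theorem isAltList_edges_of_isPath {K : SimpleGraph V} :
    ∀ {F : Set (Sym2 V)},
      (∀ ⦃x w w' : V⦄, w ≠ w' → K.Adj x w → K.Adj x w' → (s(x, w) ∈ F ↔ s(x, w') ∉ F)) →
      ∀ {a c b : V} (h : K.Adj a c) (q : K.Walk c b), (cons h q).IsPath → s(a, c) ∈ F →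
        IsAltList F (cons h q).edges
  | _, _, _, _, _, _, .nil, _, he => by simpa [isAltList_singleton_iff] using he
  | F, hF, a, c, _, h, .cons (v := d) h' q, hp, he => by
    have had : a ≠ d := by
      rintro rfl
      simp [cons_isPath_iff] at hp
    have hcd : s(c, d) ∉ F := (hF had h.symm h').mp (by rwa [Sym2.eq_swap])
    rw [edges_cons, isAltList_cons_iff]
    exact ⟨he, isAltList_edges_of_isPath (fun x w w' hne hw hw' => by
      simpa using (hF hne.symm hw' hw).symm) h' q hp.of_cons hcd⟩

end SaturatedPath

section NearPairing

variable {V : Type*} {G : SimpleGraph V}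

/-- A perfect matching of `G - u - v` together with the pair `{u, v}`, as an involution. -/
def IsNearPairing (G : SimpleGraph V) (u v : V) (τ : V → V) : Prop :=
  Function.Involutive τ ∧ τ u = v ∧ ∀ x, x ≠ u → x ≠ v → G.Adj x (τ x)

lemma IsNearPairing.factorizable {u v : V} {τ : V → V} (hτ : IsNearPairing G u v τ) :
    Factorizable (G.induce {w | w ≠ u ∧ w ≠ v}) := by
  obtain ⟨hinv, hu, hadj⟩ := hτ
  have hmem : ∀ x : {w | w ≠ u ∧ w ≠ v}, τ x ∈ {w | w ≠ u ∧ w ≠ v} := fun ⟨x, hxu, hxv⟩ =>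
    ⟨fun h => hxv (by rw [← hinv x, h, hu]), fun h => hxu (by rw [← hinv x, h, ← hu, hinv])⟩
  refine ⟨{ verts := Set.univ
            Adj := fun a b => b.1 = τ a.1
            adj_sub := fun {a b} h => ?_
            edge_vert := fun _ => Set.mem_univ _
            symm := ⟨fun a b h => by simp only [h, hinv a]⟩ }, ?_⟩
  · simpa [h] using hadj a a.2.1 a.2.2
  · rw [Subgraph.isPerfectMatching_iff]
    exact fun a => ⟨⟨τ a, hmem a⟩, rfl, fun b hb => Subtype.ext hb⟩

lemma Factorizable.exists_isNearPairing {u v : V} (huv : u ≠ v)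
    (h : Factorizable (G.induce {w | w ≠ u ∧ w ≠ v})) : ∃ τ, IsNearPairing G u v τ := by
  classical
  obtain ⟨N, hN⟩ := h
  let τ : V → V := fun x =>
    if hx : x ≠ u ∧ x ≠ v then hN.partner ⟨x, hx⟩ else if x = u then v else u
  have hτS : ∀ x (hx : x ≠ u ∧ x ≠ v), τ x = hN.partner ⟨x, hx⟩ := fun x hx => dif_pos hx
  refine ⟨τ, fun x => ?_, by simp [τ], fun x hxu hxv => ?_⟩
  · by_cases hx : x ≠ u ∧ x ≠ v
    · rw [hτS x hx, hτS _ (hN.partner ⟨x, hx⟩).2]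
      exact congrArg Subtype.val (hN.partner_involutive ⟨x, hx⟩)
    · obtain rfl | rfl : x = u ∨ x = v := by tauto
      · simp [τ, huv.symm]
      · simp [τ, huv]
  · rw [hτS x ⟨hxu, hxv⟩]
    simpa using (hN.adj_partner ⟨x, hxu, hxv⟩).adj_sub

end NearPairing

section Factorization

open SimpleGraph.Walk

variable {V : Type*} {G : SimpleGraph V} {M : Subgraph G}

theorem isAltList_edges_of_isAlternating {D : SimpleGraph V} (hD : D.IsAlternating M.spanningCoe)
    {u v a b : V} (r : (D.deleteEdges {s(u, v)}).Walk a b) (hr : r.IsPath) (hDab : D.Adj a b)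
    (hMab : ¬M.Adj a b) (hab : s(a, b) = s(u, v)) : IsAltList M.edgeSet r.edges := by
  cases r with
  | nil => exact (hDab.ne rfl).elim
  | @cons _ c _ h q =>
    rw [deleteEdges_adj, Set.mem_singleton_iff, ← hab] at h
    have hbc : b ≠ c := fun hbc => h.2 (by rw [hbc])
    have hMac : M.Adj a c := by simpa [hMab] using hD hbc hDab h.1
    refine isAltList_edges_of_isPath (fun x w w' hne hw hw' => ?_) _ q hr hMac
    simpa using hD hne hw.1 hw'.1

theorem exists_isSaturatedPath_of_isAlternating [Finite V] {D : SimpleGraph V}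
    (hD : D.IsAlternating M.spanningCoe) (hDcyc : D.IsCycles) {u v : V} (hDuv : D.Adj u v)
    (hMuv : ¬M.Adj u v) (hDG : D.deleteEdges {s(u, v)} ≤ G) :
    ∃ p : G.Walk u v, IsSaturatedPath M.edgeSet p := by
  classical
  obtain ⟨r⟩ := hDcyc.reachable_deleteEdges hDuv
  have hp := r.bypass_isPath
  have h₁ := isAltList_edges_of_isAlternating hD _ hp hDuv hMuv rfl
  have h₂ := isAltList_edges_of_isAlternating hD _ hp.reverse hDuv.symm (fun h => hMuv h.symm)
    Sym2.eq_swap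
  rw [edges_reverse] at h₂
  refine ⟨r.bypass.mapLe hDG, hp.mapLe hDG, ?_, by rwa [edges_mapLe_eq_edges]⟩
  simpa using h₁.odd_length_of_reverse h₂
    (fun h => hDuv.ne (eq_of_length_eq_zero (by simpa using h)))

variable (hM : M.IsPerfectMatching)
include hM

/-- Peeling off the first two edges `u a`, `a b` of the path, conjugating the pairing of the rest
by the transposition `(u b)` re-pairs `a` with `b` and `u` with `v`. -/
theorem IsSaturatedPath.exists_isNearPairing :
    ∀ {u v : V} {p : G.Walk u v}, IsSaturatedPath M.edgeSet p →
      ∃ τ, IsNearPairing G u v τ ∧ ∀ x ∉ p.support, τ x = hM.partner x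
  | _, _, .nil, hp => absurd hp.2.1 (by simp)
  | u, v, .cons h .nil, hp => by
    have huv : M.Adj u v := by simpa [isAltList_singleton_iff] using hp.2.2
    exact ⟨hM.partner, ⟨hM.partner_involutive, (hM.eq_partner_of_adj huv).symm,
      fun x _ _ => (hM.adj_partner x).adj_sub⟩, fun _ _ => rfl⟩
  | u, v, .cons (v := a) h (.cons (v := b) h' p'), hp => by
    classical
    obtain ⟨hpath, hodd, halt⟩ := hp
    simp only [edges_cons, isAltList_cons_iff, compl_compl, Set.mem_compl_iff] at halt
    simp only [cons_isPath_iff, support_cons, List.mem_cons, not_or] at hpath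
    obtain ⟨⟨hp'path, ha⟩, hua, hu⟩ := hpath
    have hp' : IsSaturatedPath M.edgeSet p' :=
      ⟨hp'path, by simpa [Nat.odd_add_one] using hodd, halt.2.2⟩
    obtain ⟨τ, ⟨hinv, hb, hadj⟩, hoff⟩ := hp'.exists_isNearPairing
    have hbv := hp'.ne
    have hvu : v ≠ u := fun h => hu (h ▸ p'.end_mem_support)
    have hτu : τ u = a := by rw [hoff u hu, ← hM.eq_partner_of_adj halt.1]
    have hτa : τ a = u := by rw [← hτu, hinv]
    have hab : a ≠ b := h'.ne
    refine ⟨fun x => Equiv.swap u b (τ (Equiv.swap u b x)),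
      ⟨fun x => by simp [hinv _], by simp [hb, Equiv.swap_apply_of_ne_of_ne hvu hbv.symm],
        fun x hxu hxv => ?_⟩, fun x hx => ?_⟩
    · have hau : a ≠ u := Ne.symm hua
      by_cases hxb : x = b
      · simpa [hxb, hτu, Equiv.swap_apply_of_ne_of_ne hau hab] using h'.symm
      by_cases hxa : x = a
      · simpa [hxa, Equiv.swap_apply_of_ne_of_ne hau hab, hτa] using h'
      have hτxu : τ x ≠ u := fun h => hxa (by rw [← hinv x, h, hτu])
      have hτxb : τ x ≠ b := fun h => hxv (by rw [← hinv x, h, hb])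
      beta_reduce
      rw [Equiv.swap_apply_of_ne_of_ne hxu hxb, Equiv.swap_apply_of_ne_of_ne hτxu hτxb]
      exact hadj x hxb hxv
    · simp only [support_cons, List.mem_cons, not_or] at hx
      obtain ⟨hxu, hxa, hxp'⟩ := hx
      have hxb : x ≠ b := fun h => hxp' (h ▸ p'.start_mem_support)
      have hτxu : τ x ≠ u := fun h => hxa (by rw [← hinv x, h, hτu])
      have hτxb : τ x ≠ b := fun h => hxp' (by rw [← hinv x, h, hb]; exact p'.end_mem_support)
      beta_reduce
      rw [Equiv.swap_apply_of_ne_of_ne hxu hxb, Equiv.swap_apply_of_ne_of_ne hτxu hτxb]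
      exact hoff x hxp'

theorem IsNearPairing.exists_isSaturatedPath [Finite V] {u v : V} {τ : V → V}
    (hτ : IsNearPairing G u v τ) (huv : u ≠ v) :
    ∃ p : G.Walk u v, IsSaturatedPath M.edgeSet p := by
  obtain ⟨hinv, hτu, hadj⟩ := hτ
  by_cases hMuv : M.Adj u v
  · exact ⟨cons hMuv.adj_sub nil, isSaturatedPath_cons_nil _ hMuv⟩
  have hτv : τ v = u := by rw [← hτu, hinv]
  have hne : ∀ x, τ x ≠ x := fun x hx => by
    by_cases hxu : x = u
    · exact huv (by rw [← hτu, ← hxu, hx])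
    by_cases hxv : x = v
    · exact huv (by rw [← hτv, ← hxv, hx])
    exact (hadj x hxu hxv).ne hx.symm
  let H := SimpleGraph.fromRel fun a b => b = τ a
  have hHadj : ∀ a b, H.Adj a b ↔ b = τ a := fun a b => by
    simp only [H, fromRel_adj]
    refine ⟨fun ⟨_, h⟩ => h.elim id fun h => by rw [h, hinv], fun h => ⟨fun hab => ?_, .inl h⟩⟩
    exact hne a (h.symm.trans hab.symm)
  have hH : (⊤ : Subgraph H).IsPerfectMatching := by
    rw [Subgraph.isPerfectMatching_iff]
    exact fun a => ⟨τ a, (hHadj a _).mpr rfl, fun b hb => (hHadj a b).mp hb⟩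
  refine exists_isSaturatedPath_of_isAlternating (hM.isAlternating_symmDiff_left hH)
    (hM.symmDiff_isCycles hH) (by simp [symmDiff_def, hMuv, hHadj, hτu]) hMuv fun a b hab => ?_
  simp only [deleteEdges_adj, symmDiff_def, sup_adj, sdiff_adj, Subgraph.spanningCoe_adj,
    Subgraph.top_adj, hHadj, Set.mem_singleton_iff] at hab
  obtain ⟨⟨hMab, -⟩ | ⟨rfl, -⟩, hab⟩ := hab
  · exact hMab.adj_sub
  by_cases hau : a = u
  · simp [hau, hτu] at hab
  by_cases hav : a = v
  · simp [hav, hτv, Sym2.eq_swap] at hab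
  exact hadj a hau hav

theorem exists_isSaturatedPath_of_allowed [Finite V] {x y : V} (h : Allowed G s(x, y)) :
    ∃ p : G.Walk x y, IsSaturatedPath M.edgeSet p := by
  obtain ⟨N, hN, hxy⟩ := h
  exact IsNearPairing.exists_isSaturatedPath hM ⟨hN.partner_involutive,
    (hN.eq_partner_of_adj hxy).symm, fun z _ _ => (hN.adj_partner z).adj_sub⟩ (N.adj_sub hxy).ne

theorem exists_isSaturatedPath_iff_factorizable [Finite V] {u v : V} (huv : u ≠ v) :
    (∃ p : G.Walk u v, IsSaturatedPath M.edgeSet p) ↔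
      Factorizable (G.induce {w | w ≠ u ∧ w ≠ v}) :=
  ⟨fun ⟨_, hp⟩ => (hp.exists_isNearPairing hM).choose_spec.1.factorizable,
    fun h => (h.exists_isNearPairing huv).choose_spec.exists_isSaturatedPath hM huv⟩

end Factorization

section Splice

open SimpleGraph.Walk

variable {V : Type*} {G : SimpleGraph V} {M : Subgraph G}

def AltReachable (M : Subgraph G) (v x : V) : Prop :=
  ∃ q : G.Walk v x, q.IsPath ∧ IsAltList M.edgeSet q.edges

lemma AltReachable.of_mem_support {v x z : V} {q : G.Walk v x} (hq : q.IsPath)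
    (halt : IsAltList M.edgeSet q.edges) (hz : z ∈ q.support) : AltReachable M v z := by
  obtain ⟨q₁, q₂, rfl⟩ := mem_support_iff_exists_append.mp hz
  rw [edges_append] at halt
  exact ⟨q₁, hq.of_append_left, halt.of_append_left⟩

variable (hM : M.IsPerfectMatching)
include hM

lemma partner_mem_support_of_isAltList {a b : V} {p : G.Walk a b} (hp : 0 < p.length)
    (halt : IsAltList M.edgeSet p.edges) : hM.partner a ∈ p.support := by
  cases p with
  | nil => simp at hp
  | @cons _ c _ h q =>
    rw [edges_cons, isAltList_cons_iff] at halt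
    rw [← hM.eq_partner_of_adj halt.1]
    simp

lemma IsSaturatedPath.partner_mem_support {x y z : V} {l : G.Walk x y}
    (hl : IsSaturatedPath M.edgeSet l) (hz : z ∈ l.support) : hM.partner z ∈ l.support := by
  obtain ⟨l₁, l₂, rfl⟩ := mem_support_iff_exists_append.mp hz
  rcases Nat.even_or_odd l₁.length with he | ho
  · have h₂ := hl.of_append_right he
    exact support_subset_support_append_right _ _
      (partner_mem_support_of_isAltList hM h₂.2.1.pos h₂.2.2)
  · have h₁ := hl.reverse_of_append_left ho
    have := partner_mem_support_of_isAltList hM h₁.2.1.pos h₁.2.2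
    rw [support_reverse, List.mem_reverse] at this
    exact support_subset_support_append_left _ _ this

/-- `q` meets `l` only in its last vertex `z`, so it enters `z` through an edge not in `M`;
continuing along `l` from `z` through the `M`-edge at `z` reaches an end of `l`. -/
theorem IsSaturatedPath.splice {x y v z : V} {l : G.Walk x y} (hl : IsSaturatedPath M.edgeSet l)
    {q : G.Walk v z} (hq : q.IsPath) (hqalt : IsAltList M.edgeSet q.edges)
    (hz : z ∈ l.support) (hql : ∀ a ∈ q.support, a ∈ l.support → a = z) :
    (∃ r : G.Walk v x, IsSaturatedPath M.edgeSet r) ∨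
      ∃ r : G.Walk v y, IsSaturatedPath M.edgeSet r := by
  have hqe : Even q.length := by
    by_contra ho
    rw [Nat.not_even_iff_odd] at ho
    have h := partner_mem_support_of_isAltList hM (p := q.reverse) (by simpa using ho.pos)
      (by simpa using hqalt.reverse (by simpa using ho))
    rw [support_reverse, List.mem_reverse] at h
    exact hM.partner_ne z (hql _ h (hl.partner_mem_support hM hz))
  obtain ⟨l₁, l₂, rfl⟩ := mem_support_iff_exists_append.mp hz
  rcases Nat.even_or_odd l₁.length with he | ho
  · refine .inr ⟨_, isSaturatedPath_append hq hqalt hqe (hl.of_append_right he) fun a ha ha₂ =>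
      hql a ha (support_subset_support_append_right _ _ ha₂)⟩
  · refine .inl ⟨_, isSaturatedPath_append hq hqalt hqe (hl.reverse_of_append_left ho)
      fun a ha ha₁ => hql a ha (support_subset_support_append_left _ _ ?_)⟩
    rwa [support_reverse, List.mem_reverse] at ha₁

theorem AltReachable.exists_isSaturatedPath {v x y : V} (h : AltReachable M v x)
    {l : G.Walk x y} (hl : IsSaturatedPath M.edgeSet l) :
    (∃ r : G.Walk v x, IsSaturatedPath M.edgeSet r) ∨
      ∃ r : G.Walk v y, IsSaturatedPath M.edgeSet r := by
  obtain ⟨q, hq, hqalt⟩ := h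
  obtain ⟨z, hz, q₁, q₂, rfl, hq₁⟩ := q.exists_append_forall_mem_eq (S := {a | a ∈ l.support})
    l.start_mem_support
  rw [edges_append] at hqalt
  exact hl.splice hM hq.of_append_left hqalt.of_append_left hz hq₁

theorem AltReachable.of_allowed [Finite V] {v x y : V} (h : AltReachable M v x)
    (hxy : (allowedSubgraph G).Adj x y) : AltReachable M v y := by
  rw [allowedSubgraph, fromEdgeSet_adj] at hxy
  obtain ⟨⟨hGxy : G.Adj x y, hall⟩, -⟩ := hxy
  obtain ⟨l, hl⟩ := exists_isSaturatedPath_of_allowed hM hall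
  rcases h.exists_isSaturatedPath hM hl with ⟨r, hr⟩ | ⟨r, hr⟩
  · by_cases hy : y ∈ r.support
    · exact .of_mem_support hr.1 hr.2.2 hy
    have hxyM : s(x, y) ∉ M.edgeSet := fun hxyM => hy <| by
      rw [hM.eq_partner_of_adj (Subgraph.mem_edgeSet.mp hxyM)]
      exact hr.partner_mem_support hM r.end_mem_support
    refine ⟨r.concat hGxy, hr.1.concat hy hGxy, ?_⟩
    rw [edges_concat, List.concat_eq_append]
    exact hr.2.2.concat (iff_of_false hxyM (by simpa using hr.2.1))
  · exact ⟨r, hr.1, hr.2.2⟩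

theorem SameFC.altReachable [Finite V] {v u : V} (h : SameFC G v u) : AltReachable M v u := by
  obtain ⟨p⟩ := h
  suffices ∀ {a b} (p : (allowedSubgraph G).Walk a b), AltReachable M v a → AltReachable M v b
    from this p ⟨nil, by simp, by simp [isAltList_iff_getElem]⟩
  intro a b p
  induction p with
  | nil => exact id
  | cons h _ ih => exact fun hv => ih (hv.of_allowed hM h)

end Splice

theorem exists_eq_setOf_rel_iff {α : Type*} {C S : Set α} {E : α → α → Prop}
    (hrefl : ∀ a, E a a) (hsymm : ∀ a b, E a b → E b a)
    (htrans : ∀ a ∈ C, ∀ b ∈ C, ∀ c, E a b → E b c → E a c)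
    (hC : C.Nonempty) (hSC : S ⊆ C) :
    (∃ v ∈ C, S = {u | u ∈ C ∧ E u v}) ↔
      ((∀ a ∈ S, ∀ b ∈ S, E a b) ∧
        ∀ S' : Set α, S ⊆ S' → S' ⊆ C → (∀ a ∈ S', ∀ b ∈ S', E a b) → S' = S) := by
  constructor
  · rintro ⟨v, hv, rfl⟩
    have hvS : v ∈ {u | u ∈ C ∧ E u v} := ⟨hv, hrefl v⟩
    exact ⟨fun a ha b hb => htrans a ha.1 v hv b ha.2 (hsymm _ _ hb.2), fun S' hSS' hS'C hS' =>
      Set.Subset.antisymm (fun u hu => ⟨hS'C hu, hS' u hu v (hSS' hvS)⟩) hSS'⟩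
  · rintro ⟨hS, hmax⟩
    obtain ⟨c, hc⟩ := hC
    obtain ⟨v, hv⟩ : S.Nonempty := by
      by_contra hne
      rw [Set.not_nonempty_iff_eq_empty] at hne
      have := hmax {c} (by simp [hne]) (by simpa using hc) (by simp [hrefl])
      simp [hne] at this
    refine ⟨v, hSC hv, Set.Subset.antisymm (fun u hu => ⟨hSC hu, hS u hu v hv⟩) ?_⟩
    rintro u ⟨hu, huv⟩
    have hu' : ∀ b ∈ S, E u b := fun b hb => htrans u hu v (hSC hv) b huv (hS v hv b hb)
    have hinsert : ∀ a ∈ insert u S, ∀ b ∈ insert u S, E a b := by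
      rintro a (rfl | ha) b (rfl | hb)
      · exact hrefl _
      · exact hu' _ hb
      · exact hsymm _ _ (hu' a ha)
      · exact hS a ha b hb
    rw [← hmax (insert u S) (Set.subset_insert u S) (Set.insert_subset hu hSC) hinsert]
    exact Set.mem_insert u S

theorem simG_iff {V : Type*} [Finite V] {G : SimpleGraph V} {M : Subgraph G}
    (hM : M.IsPerfectMatching) {u v : V} :
    simG G u v ↔ SameFC G u v ∧ ∀ p : G.Walk u v, ¬IsSaturatedPath M.edgeSet p := by
  by_cases huv : u = v
  · subst huv
    simpa [simG] using fun _ p hp => hp.ne rfl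
  · simp [simG, huv, ← exists_isSaturatedPath_iff_factorizable hM huv]

theorem stmt18 {V : Type*} [Fintype V] (G : SimpleGraph V)
    (M : SimpleGraph.Subgraph G) (hM : M.IsPerfectMatching)
    (C : Set V) (hC : IsFactorComponent G C)
    (S : Set V) (hSC : S ⊆ C) :
    IsClassOf G C S ↔
      ((∀ a ∈ S, ∀ b ∈ S, ∀ p : G.Walk a b, ¬ IsSaturatedPath M.edgeSet p) ∧
        ∀ S' : Set V, S ⊆ S' → S' ⊆ C →
          (∀ a ∈ S', ∀ b ∈ S', ∀ p : G.Walk a b, ¬ IsSaturatedPath M.edgeSet p) →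
          S' = S) := by
  obtain ⟨c, rfl⟩ := hC
  have hsame : ∀ {u v}, SameFC G c v → (SameFC G u v ↔ SameFC G c u) := fun hv =>
    ⟨fun hu => hv.trans hu.symm, fun hu => hu.symm.trans hv⟩
  have htrans (a) (ha : SameFC G c a) (b) (hb : SameFC G c b) (d)
      (hab : ∀ p : G.Walk a b, ¬IsSaturatedPath M.edgeSet p)
      (hbd : ∀ p : G.Walk b d, ¬IsSaturatedPath M.edgeSet p) (p : G.Walk a d)
      (hp : IsSaturatedPath M.edgeSet p) : False := by
    rcases (SameFC.altReachable hM (hb.symm.trans ha)).exists_isSaturatedPath hM hp with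
      ⟨r, hr⟩ | ⟨r, hr⟩
    · exact hab _ hr.reverse
    · exact hbd r hr
  refine Iff.trans ?_ (exists_eq_setOf_rel_iff (fun a p hp => hp.ne rfl)
    (fun a b h p hp => h _ hp.reverse) htrans ⟨c, Reachable.refl c⟩ hSC)
  rw [IsClassOf, IsCanonicalClass, and_iff_left hSC]
  constructor
  · rintro ⟨v, rfl⟩
    have hv : SameFC G c v := hSC ⟨Reachable.refl v, .inl rfl⟩
    exact ⟨v, hv, Set.ext fun u => by simp [simG_iff hM, hsame hv]⟩
  · rintro ⟨v, hv, rfl⟩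
    exact ⟨v, Set.ext fun u => by simp [simG_iff hM, hsame hv]⟩
end

section
/- Let G be a graph and X ⊆ V(G) an odd-maximal barrier of G. Then X is a maximal barrier of G (i.e., no proper superset of X is a barrier) if and only if C_X = ∅. -/
open SimpleGraph

/-! If `C_X = ∅`, a proper superset of `X` is `X ∪ Y` with `∅ ≠ Y ⊆ D_X`, which odd-maximality
rules out as a barrier. Conversely, an even component `K` of `G - X` has a vertex `u` whose
deletion leaves `K - u` connected (a leaf of a spanning tree). Then `K - u` is an odd component
of `G - (X + u)` and every other component of `G - X` survives unchanged, so
`q(X + u) = q(X) + 1` and `X + u` is again a barrier. -/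

namespace SimpleGraph

variable {V W : Type*} {G : SimpleGraph V}

lemma Preconnected.reachable_induce_of_hom {H : SimpleGraph W} (hH : H.Preconnected)
    (ψ : H →g G) {S : Set V} (hS : ∀ w, ψ w ∈ S) (a b : W) :
    (G.induce S).Reachable ⟨ψ a, hS a⟩ ⟨ψ b, hS b⟩ :=
  (hH a b).map (⟨fun w => ⟨ψ w, hS w⟩, ψ.map_rel⟩ : H →g G.induce S)

namespace ConnectedComponent

variable {A B : Set V}

lemma one_lt_ncard_supp_of_even [Finite V] (K : G.ConnectedComponent) (h : Even K.supp.ncard) :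
    1 < K.supp.ncard := by
  obtain ⟨r, hr⟩ := h
  have := K.nonempty_supp.ncard_pos
  omega

lemma reachable_induce_of_supp_subset (hBA : B ⊆ A) (d : (G.induce A).ConnectedComponent)
    (hd : ∀ y ∈ d.supp, (y : V) ∈ B) {x y : B} (hx : G.induceHomOfLE hBA x ∈ d.supp)
    (hy : G.induceHomOfLE hBA y ∈ d.supp) : (G.induce B).Reachable x y :=
  d.connected_toSimpleGraph.preconnected.reachable_induce_of_hom
    ((Embedding.induce A).toHom.comp d.toSimpleGraph_hom) (fun w => hd w.1 w.2) ⟨_, hx⟩ ⟨_, hy⟩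

lemma exists_reachable_induce_diff_singleton [Finite V] (K : (G.induce A).ConnectedComponent)
    (hK : 1 < K.supp.ncard) :
    ∃ (u : V) (hu : u ∈ A), (G.induce A).connectedComponentMk ⟨u, hu⟩ = K ∧
      ∀ x y : ↥(A \ {u}), G.induceHomOfLE Set.sdiff_subset x ∈ K.supp →
        G.induceHomOfLE Set.sdiff_subset y ∈ K.supp → (G.induce (A \ {u})).Reachable x y := by
  have : Nontrivial K.supp := (Set.one_lt_ncard_iff_nontrivial.mp hK).coe_sort
  obtain ⟨v, hv⟩ :=
    K.connected_toSimpleGraph.exists_connected_induce_compl_singleton_of_finite_nontrivial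
  refine ⟨v.1.1, v.1.2, v.2, fun x y hx hy => ?_⟩
  have hS (w : ↥({v}ᶜ : Set K.supp)) : w.1.1.1 ∈ A \ {v.1.1} :=
    ⟨w.1.1.2, fun h => w.2 (Subtype.ext (Subtype.ext h))⟩
  exact hv.preconnected.reachable_induce_of_hom
    ((Embedding.induce A).toHom.comp (K.toSimpleGraph_hom.comp (Embedding.induce _).toHom)) hS
    ⟨⟨_, hx⟩, fun h => x.2.2 (congrArg (fun w : K.supp => w.1.1) h)⟩
    ⟨⟨_, hy⟩, fun h => y.2.2 (congrArg (fun w : K.supp => w.1.1) h)⟩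

section DeleteVertex

variable {u : V} (hu : u ∈ A)
  -- `u` is not a cut vertex of its component `K` of `G[A]`
  (hK : ∀ x y : ↥(A \ {u}), G.induceHomOfLE Set.sdiff_subset x ∈
      ((G.induce A).connectedComponentMk ⟨u, hu⟩).supp →
    G.induceHomOfLE Set.sdiff_subset y ∈ ((G.induce A).connectedComponentMk ⟨u, hu⟩).supp →
    (G.induce (A \ {u})).Reachable x y)

local notation "φ" =>
  ConnectedComponent.map (Embedding.toHom (induceHomOfLE G (@Set.sdiff_subset V A (singleton u))))

include hK in
lemma supp_map_induceHomOfLE_diff_singleton (c : (G.induce (A \ {u})).ConnectedComponent) :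
    (φ c).supp \ {⟨u, hu⟩} = G.induceHomOfLE Set.sdiff_subset '' c.supp := by
  ext y
  constructor
  · rintro ⟨hy, hyu⟩
    have hyB : (y : V) ∈ A \ {u} := ⟨y.2, fun h => hyu (Subtype.ext h)⟩
    refine ⟨⟨y, hyB⟩, ?_, rfl⟩
    obtain ⟨x, rfl⟩ : ∃ x, (G.induce _).connectedComponentMk x = c := c.exists_rep
    have hx : G.induceHomOfLE Set.sdiff_subset x ∈ (φ ((G.induce _).connectedComponentMk x)).supp :=
      rfl
    refine ConnectedComponent.sound ?_
    by_cases hc :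
      φ ((G.induce _).connectedComponentMk x) = (G.induce A).connectedComponentMk ⟨u, hu⟩
    · exact hK _ _ (hc ▸ hy) (hc ▸ hx)
    · refine reachable_induce_of_supp_subset Set.sdiff_subset _ (fun z hz => ⟨z.2, fun h => hc ?_⟩)
        hy hx
      rw [← hz]
      exact congrArg _ (Subtype.ext h)
  · rintro ⟨x, hx, rfl⟩
    refine ⟨?_, fun h => x.2.2 (congrArg Subtype.val h)⟩
    rw [mem_supp_iff] at hx ⊢
    rw [← hx]
    rfl

lemma exists_map_induceHomOfLE_diff_singleton_eq (d : (G.induce A).ConnectedComponent) {y : A}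
    (hy : y ∈ d.supp) (hyu : y ≠ ⟨u, hu⟩) : ∃ c, φ c = d :=
  ⟨(G.induce _).connectedComponentMk ⟨y, y.2, fun h => hyu (Subtype.ext h)⟩, hy⟩

include hK in
lemma map_induceHomOfLE_diff_singleton_injective : Function.Injective φ := fun c c' h => by
  have h' := supp_map_induceHomOfLE_diff_singleton hu hK c
  rw [h, supp_map_induceHomOfLE_diff_singleton hu hK c'] at h'
  exact supp_injective (Set.image_injective.mpr (G.induceHomOfLE _).injective h').symm

include hK in
lemma ncard_supp_map_induceHomOfLE_diff_singleton_of_ne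
    {c : (G.induce (A \ {u})).ConnectedComponent}
    (hc : φ c ≠ (G.induce A).connectedComponentMk ⟨u, hu⟩) : (φ c).supp.ncard = c.supp.ncard := by
  rw [← Set.ncard_image_of_injective c.supp (G.induceHomOfLE Set.sdiff_subset).injective,
    ← supp_map_induceHomOfLE_diff_singleton hu hK c,
    Set.sdiff_singleton_eq_self fun h => hc ((mem_supp_iff _ _).mp h).symm]

include hK in
lemma ncard_supp_map_induceHomOfLE_diff_singleton_of_eq [Finite V]
    {c : (G.induce (A \ {u})).ConnectedComponent}
    (hc : φ c = (G.induce A).connectedComponentMk ⟨u, hu⟩) :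
    (φ c).supp.ncard = c.supp.ncard + 1 := by
  rw [← Set.ncard_image_of_injective c.supp (G.induceHomOfLE Set.sdiff_subset).injective,
    ← supp_map_induceHomOfLE_diff_singleton hu hK c,
    Set.ncard_sdiff_singleton_add_one (hc ▸ rfl)]

include hK in
theorem ncard_oddComponents_induce_diff_singleton [Finite V]
    (heven : Even ((G.induce A).connectedComponentMk ⟨u, hu⟩).supp.ncard) :
    (G.induce (A \ {u})).oddComponents.ncard = (G.induce A).oddComponents.ncard + 1 := by
  set K := (G.induce A).connectedComponentMk ⟨u, hu⟩
  have hKodd : K ∉ (G.induce A).oddComponents := Nat.not_odd_iff_even.mpr heven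
  have himage : φ '' (G.induce (A \ {u})).oddComponents = insert K (G.induce A).oddComponents := by
    ext d
    constructor
    · rintro ⟨c, hc, rfl⟩
      by_cases hcK : φ c = K
      · exact Or.inl hcK
      · refine Or.inr (?_ : Odd _)
        rw [ncard_supp_map_induceHomOfLE_diff_singleton_of_ne hu hK hcK]
        exact hc
    · rintro (rfl | hd)
      · obtain ⟨z, hzK, hzu⟩ := Set.exists_ne_of_one_lt_ncard (K.one_lt_ncard_supp_of_even heven)
          ⟨u, hu⟩
        obtain ⟨c, hc⟩ := exists_map_induceHomOfLE_diff_singleton_eq hu K hzK hzu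
        refine ⟨c, ?_, hc⟩
        have hc1 := ncard_supp_map_induceHomOfLE_diff_singleton_of_eq hu hK hc
        rw [hc] at hc1
        exact Nat.not_even_iff_odd.mp (Nat.even_add_one.mp (hc1 ▸ heven))
      · obtain ⟨y, hy⟩ := d.nonempty_supp
        have hdK : d ≠ K := fun h => hKodd (h ▸ hd)
        obtain ⟨c, rfl⟩ := exists_map_induceHomOfLE_diff_singleton_eq hu d hy fun h =>
          hdK (((mem_supp_iff _ _).mp hy).symm.trans (congrArg _ h))
        refine ⟨c, (?_ : Odd _), rfl⟩
        rw [← ncard_supp_map_induceHomOfLE_diff_singleton_of_ne hu hK hdK]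
        exact hd
  rw [← Set.ncard_image_of_injective _ (map_induceHomOfLE_diff_singleton_injective hu hK), himage,
    Set.ncard_insert_of_notMem hKodd]

end DeleteVertex

end ConnectedComponent
end SimpleGraph

section Barrier

variable {V : Type*} {G : SimpleGraph V} {X : Set V}

lemma compl_subset_DX_of_CX_eq_empty (hC : CX G X = ∅) : Xᶜ ⊆ DX G X := fun z hzX => by
  by_contra hzD
  have hzC : z ∈ CX G X := fun h => h.elim hzX hzD
  rw [hC] at hzC
  exact hzC

lemma exists_qG_insert_eq_add_one [Finite V] (hC : (CX G X).Nonempty) :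
    ∃ u ∉ X, qG G (insert u X) = qG G X + 1 := by
  obtain ⟨v, hv⟩ := hC
  have hvX : v ∈ Xᶜ := fun h => hv (Or.inl h)
  have heven : Even ((G.induce Xᶜ).connectedComponentMk ⟨v, hvX⟩).supp.ncard :=
    Nat.not_odd_iff_even.mp fun h => hv (Or.inr ⟨hvX, h⟩)
  obtain ⟨u, hu, huK, hcut⟩ := ConnectedComponent.exists_reachable_induce_diff_singleton _
    (ConnectedComponent.one_lt_ncard_supp_of_even _ heven)
  refine ⟨u, hu, ?_⟩
  have hcompl : (insert u X)ᶜ = Xᶜ \ {u} := by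
    rw [Set.insert_eq, Set.compl_union, Set.sdiff_eq, Set.inter_comm]
  rw [qG, qG, hcompl]
  rw [← huK] at hcut heven
  exact ConnectedComponent.ncard_oddComponents_induce_diff_singleton hu hcut heven

lemma IsBarrierGen.exists_ssuperset [Fintype V] (hX : IsBarrierGen G X) (hC : (CX G X).Nonempty) :
    ∃ Y, X ⊂ Y ∧ IsBarrierGen G Y := by
  obtain ⟨u, hu, hq⟩ := exists_qG_insert_eq_add_one hC
  refine ⟨insert u X, Set.ssubset_insert hu, ?_⟩
  rw [IsBarrierGen, hq, hX, Set.ncard_insert_of_notMem hu]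
  rfl

end Barrier

theorem stmt19 {V : Type*} [Fintype V] (G : SimpleGraph V)
    (X : Set V) (hX : IsOddMaximalBarrierGen G X) :
    (∀ Y : Set V, X ⊂ Y → ¬ IsBarrierGen G Y) ↔ CX G X = ∅ := by
  constructor
  · intro hmax
    by_contra hC
    obtain ⟨Y, hXY, hY⟩ := hX.1.exists_ssuperset (Set.nonempty_iff_ne_empty.mpr hC)
    exact hmax Y hXY hY
  · intro hC Y hXY hY
    have hYX : Y \ X ⊆ DX G X := fun z hz => compl_subset_DX_of_CX_eq_empty hC hz.2
    refine hX.2 (Y \ X) hYX (Set.nonempty_of_ssubset hXY) ?_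
    rwa [Set.union_sdiff_cancel hXY.subset]
end
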